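/- Let d = 2 and assume h ≥ δ^μ and λ₁, λ₂ > 0. Fix q ∈ {1,…,N}. Then: (i) a_q^{(−1,0)} − a_q^{(J−1,−1)} ≥ λ₂ (h + δ^μ)/2 − λ₁; (ii) for every j₂ with 0 ≤ j₂ ≤ J−3, a_q^{(−1,j₂+1)} − a_q^{(J−1,j₂)} = λ₂ h − λ₁; and (iii) a_q^{(−1,J−1)} − a_q^{(J−1,J−2)} ≥ λ₂ (h + δ^μ)/2 − λ₁. In particular, if λ₁ < λ₂ · min{ h, (h + δ^μ)/2 }, then the tail of each row is strictly below the head of the next row: a_q^{(J−1,j₂)} < a_q^{(−1,j₂+1)} for all j₂ ∈ {−1,…,J−2}. -/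

import Mathlib

noncomputable section

/-- The smeared-out Heaviside shape function `S(z) = z - sin(2πz)/(2π)`. -/
def Sfun (z : ℝ) : ℝ := z - Real.sin (2 * Real.pi * z) / (2 * Real.pi)

/-- The quintic shape function `P(z) = z³(6z² - 15z + 10)`. -/
def Pfun (z : ℝ) : ℝ := z ^ 3 * (6 * z ^ 2 - 15 * z + 10)

/-- The inner function `ψ_q(x) = φ(x + (1-q)δ) - φ((1-q)δ)`. -/
def psi (φ : ℝ → ℝ) (δ : ℝ) (q : ℕ) (x : ℝ) : ℝ :=
  φ (x + (1 - (q : ℝ)) * δ) - φ ((1 - (q : ℝ)) * δ)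

/-- The hypercube center coordinate `c_q^j`, with the boundary conventions
`c_q^{-1} = 0` and `c_q^{J-1} = 1`. -/
def center (h δ : ℝ) (J : ℕ) (q : ℕ) (j : ℤ) : ℝ :=
  if j = -1 then 0
  else if j = (J : ℤ) - 1 then 1
  else (j : ℝ) * h + (h + δ) / 2 + ((q : ℝ) - 1) * δ

/-- The mapped hypercube center `a_q^jv = Ψ_q(𝐜_q^jv) = Σ_p λ_p ψ_q(c_q^{j_p})`. -/
def amap (φ : ℝ → ℝ) (h δ : ℝ) (J : ℕ) {d : ℕ} (lam : Fin d → ℝ)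
    (q : ℕ) (jv : Fin d → ℤ) : ℝ :=
  ∑ p, lam p * psi φ δ q (center h δ J q (jv p))

/-!
The offset `t₀ = (1 - q)δ` and the point `1 + t₀` lie in quintic pieces with the same local
coordinate, so `ψ_q(1) = 1`; each interior center is sent to the midpoint of a quintic piece, where
`P(1/2) = 1/2`, so `ψ_q(c_q^j) = jh + (h + δ^μ)/2 - φ(t₀)`. Consecutive interior centers are thus
`h` apart, and at the two ends of a row the gap is controlled by `δ^μ - h ≤ φ(t₀) ≤ 0`, which comes
from `0 ≤ P ≤ 1` on `[0, 1]`.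
-/

lemma Pfun_one_half : Pfun (1 / 2) = 1 / 2 := by norm_num [Pfun]

lemma Pfun_nonneg {s : ℝ} (hs : 0 ≤ s) : 0 ≤ Pfun s :=
  mul_nonneg (pow_nonneg hs 3) (by nlinarith [sq_nonneg (s - 5 / 4)])

lemma Pfun_le_one {s : ℝ} (hs : s ≤ 1) : Pfun s ≤ 1 := by
  have hfactor : 1 - Pfun s = (1 - s) ^ 3 * (6 * s ^ 2 + 3 * s + 1) := by unfold Pfun; ring
  have : 0 ≤ (1 - s) ^ 3 * (6 * s ^ 2 + 3 * s + 1) :=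
    mul_nonneg (pow_nonneg (by linarith) 3) (by nlinarith [sq_nonneg (s + 1 / 4)])
  linarith

def HasQuinticPieces (φ : ℝ → ℝ) (δ μ h : ℝ) : Prop :=
  ∀ j : ℤ, ∀ t ∈ Set.Icc ((j : ℝ) * h + δ) (((j : ℝ) + 1) * h),
    φ t = (j : ℝ) * h + δ ^ μ + (h - δ ^ μ) * Pfun ((t - (j : ℝ) * h - δ) / (h - δ))

namespace HasQuinticPieces

variable {φ : ℝ → ℝ} {δ μ h : ℝ}

lemma apply_add_int_mul (hφ : HasQuinticPieces φ δ μ h) {j : ℤ} {t : ℝ}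
    (ht : t ∈ Set.Icc ((j : ℝ) * h + δ) (((j : ℝ) + 1) * h)) (k : ℤ) :
    φ (t + k * h) = φ t + k * h := by
  have hshift : t + k * h ∈ Set.Icc (((j + k : ℤ) : ℝ) * h + δ) ((((j + k : ℤ) : ℝ) + 1) * h) := by
    push_cast
    constructor <;> linarith [ht.1, ht.2]
  rw [hφ (j + k) _ hshift, hφ j t ht]
  push_cast
  ring_nf

lemma mem_Icc (hφ : HasQuinticPieces φ δ μ h) (hle : δ ^ μ ≤ h) {j : ℤ} {t : ℝ}
    (ht : t ∈ Set.Icc ((j : ℝ) * h + δ) (((j : ℝ) + 1) * h)) :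
    φ t ∈ Set.Icc ((j : ℝ) * h + δ ^ μ) (((j : ℝ) + 1) * h) := by
  have hδh : 0 ≤ h - δ := by linarith [ht.1, ht.2]
  set s := (t - (j : ℝ) * h - δ) / (h - δ)
  have hs0 : 0 ≤ s := div_nonneg (by linarith [ht.1]) hδh
  have hs1 : s ≤ 1 := div_le_one_of_le₀ (by linarith [ht.2]) hδh
  have hP0 := mul_nonneg (sub_nonneg.2 hle) (Pfun_nonneg hs0)
  have hP1 := mul_le_mul_of_nonneg_left (Pfun_le_one hs1) (sub_nonneg.2 hle)
  rw [hφ j t ht]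
  constructor <;> linarith

lemma apply_midpoint (hφ : HasQuinticPieces φ δ μ h) (hδh : δ < h) (j : ℤ) :
    φ ((j : ℝ) * h + (h + δ) / 2) = (j : ℝ) * h + (h + δ ^ μ) / 2 := by
  have hmem : (j : ℝ) * h + (h + δ) / 2 ∈ Set.Icc ((j : ℝ) * h + δ) (((j : ℝ) + 1) * h) := by
    constructor <;> linarith
  have harg : ((j : ℝ) * h + (h + δ) / 2 - (j : ℝ) * h - δ) / (h - δ) = 1 / 2 := by
    rw [div_eq_iff (by linarith)]; ring
  rw [hφ j _ hmem, harg, Pfun_one_half]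
  ring

end HasQuinticPieces

lemma psi_zero (φ : ℝ → ℝ) (δ : ℝ) (q : ℕ) : psi φ δ q 0 = 0 := by simp [psi]

lemma psi_one {φ : ℝ → ℝ} {δ μ h : ℝ} {J : ℕ} {q : ℕ} (hφ : HasQuinticPieces φ δ μ h)
    (hJh : (J : ℝ) * h = 1) {j : ℤ}
    (ht : (1 - (q : ℝ)) * δ ∈ Set.Icc ((j : ℝ) * h + δ) (((j : ℝ) + 1) * h)) :
    psi φ δ q 1 = 1 := by
  have := hφ.apply_add_int_mul ht J
  rw [Int.cast_natCast, hJh] at this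
  rw [psi, add_comm, this]
  ring

section Center

variable (h δ : ℝ) (J q : ℕ)

lemma center_neg_one : center h δ J q (-1) = 0 := if_pos rfl

lemma center_last (hJ : 0 < J) : center h δ J q ((J : ℤ) - 1) = 1 := by
  rw [center, if_neg (by omega), if_pos rfl]

lemma center_of_nonneg_of_lt {j : ℤ} (hj₀ : 0 ≤ j) (hjJ : j < (J : ℤ) - 1) :
    center h δ J q j = (j : ℝ) * h + (h + δ) / 2 + ((q : ℝ) - 1) * δ := by
  rw [center, if_neg (by omega), if_neg (by omega)]

end Center

lemma psi_center_of_nonneg_of_lt {φ : ℝ → ℝ} {δ μ h : ℝ} {J : ℕ} (q : ℕ)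
    (hφ : HasQuinticPieces φ δ μ h) (hδh : δ < h) {j : ℤ} (hj₀ : 0 ≤ j) (hjJ : j < (J : ℤ) - 1) :
    psi φ δ q (center h δ J q j) = (j : ℝ) * h + ((h + δ ^ μ) / 2 - φ ((1 - (q : ℝ)) * δ)) := by
  rw [center_of_nonneg_of_lt h δ J q hj₀ hjJ, psi, ← add_sub_assoc, ← hφ.apply_midpoint hδh j]
  ring_nf

lemma offset_mem_Icc {N q : ℕ} {δ h : ℝ} (hδ : 0 ≤ δ) (hh : h = N * δ) (hq1 : 1 ≤ q)
    (hq2 : q ≤ N) :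
    (1 - (q : ℝ)) * δ ∈ Set.Icc (((-1 : ℤ) : ℝ) * h + δ) ((((-1 : ℤ) : ℝ) + 1) * h) := by
  have := mul_le_mul_of_nonneg_right (by exact_mod_cast hq1 : (1 : ℝ) ≤ q) hδ
  have := mul_le_mul_of_nonneg_right (by exact_mod_cast hq2 : (q : ℝ) ≤ N) hδ
  push_cast
  constructor <;> linarith

section Increments

variable {g : ℤ → ℝ} {J : ℕ} {h b : ℝ}

lemma increments_of_eq_affine_interior {m : ℝ} (hJ : 0 < J) (hJh : (J : ℝ) * h = 1)
    (g_neg : g (-1) = 0) (g_last : g ((J : ℤ) - 1) = 1)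
    (g_mid : ∀ j : ℤ, 0 ≤ j → j < (J : ℤ) - 1 → g j = j * h + m)
    (hbh : b ≤ h) (hbm : b ≤ m) (hmb : m ≤ 2 * h - b) :
    b ≤ g 0 - g (-1) ∧ (∀ j : ℤ, 0 ≤ j → j ≤ (J : ℤ) - 3 → g (j + 1) - g j = h) ∧
      b ≤ g ((J : ℤ) - 1) - g ((J : ℤ) - 2) := by
  rcases Nat.lt_or_ge J 2 with hJ1 | hJ2
  · obtain rfl : J = 1 := by omega
    norm_num at g_last hJh ⊢
    refine ⟨by linarith, fun j hj₀ hj => by omega, by linarith⟩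
  · have hJ2' : (2 : ℝ) ≤ J := by exact_mod_cast hJ2
    refine ⟨?_, fun j hj₀ hj => ?_, ?_⟩
    · rw [g_mid 0 le_rfl (by omega), g_neg]; simpa using hbm
    · rw [g_mid (j + 1) (by omega) (by omega), g_mid j hj₀ (by omega)]; push_cast; ring
    · rw [g_last, g_mid _ (by omega) (by omega)]; push_cast; linarith

lemma min_le_increment (h₀ : b ≤ g 0 - g (-1))
    (hmid : ∀ j : ℤ, 0 ≤ j → j ≤ (J : ℤ) - 3 → g (j + 1) - g j = h)
    (hlast : b ≤ g ((J : ℤ) - 1) - g ((J : ℤ) - 2)) {j : ℤ} (hj₁ : -1 ≤ j) (hj₂ : j ≤ (J : ℤ) - 2) :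
    min h b ≤ g (j + 1) - g j := by
  rcases hj₁.eq_or_lt with rfl | hj₁
  · simpa using min_le_of_right_le h₀
  rcases hj₂.eq_or_lt with rfl | hj₂
  · rw [show (J : ℤ) - 2 + 1 = J - 1 by ring]; exact min_le_of_right_le hlast
  · rw [hmid j (by omega) (by omega)]; exact min_le_left h b

end Increments

theorem amap_two_dim_rows_general
    (N : ℕ) (hN : 2 ≤ N) (δ : ℝ) (hδ : 0 < δ) (μ : ℝ)
    (h : ℝ) (hh : h = (N : ℝ) * δ)
    (φ : ℝ → ℝ)
    (hφP : ∀ j : ℤ, ∀ t ∈ Set.Icc ((j : ℝ) * h + δ) (((j : ℝ) + 1) * h),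
      φ t = (j : ℝ) * h + δ ^ μ + (h - δ ^ μ) * Pfun ((t - (j : ℝ) * h - δ) / (h - δ)))
    (J : ℕ) (hJ : 0 < J) (hJh : (J : ℝ) * h = 1)
    (l1 l2 : ℝ) (hl2 : 0 < l2)
    (q : ℕ) (hq1 : 1 ≤ q) (hq2 : q ≤ N)
    (hle : δ ^ μ ≤ h)
    (a : ℤ → ℤ → ℝ)
    (ha : ∀ j₁ j₂ : ℤ, a j₁ j₂ =
      l1 * psi φ δ q (center h δ J q j₁) + l2 * psi φ δ q (center h δ J q j₂)) :
    (l2 * ((h + δ ^ μ) / 2) - l1 ≤ a (-1) 0 - a ((J : ℤ) - 1) (-1)) ∧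
    (∀ j₂ : ℤ, 0 ≤ j₂ → j₂ ≤ (J : ℤ) - 3 →
      a (-1) (j₂ + 1) - a ((J : ℤ) - 1) j₂ = l2 * h - l1) ∧
    (l2 * ((h + δ ^ μ) / 2) - l1 ≤ a (-1) ((J : ℤ) - 1) - a ((J : ℤ) - 1) ((J : ℤ) - 2)) ∧
    (l1 < l2 * min h ((h + δ ^ μ) / 2) →
      ∀ j₂ : ℤ, -1 ≤ j₂ → j₂ ≤ (J : ℤ) - 2 →
        a ((J : ℤ) - 1) j₂ < a (-1) (j₂ + 1)) := by
  have hφ : HasQuinticPieces φ δ μ h := hφP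
  have hδh : δ < h := by
    have := mul_le_mul_of_nonneg_right (by exact_mod_cast hN : (2 : ℝ) ≤ N) hδ.le
    linarith
  have ht₀ := offset_mem_Icc hδ.le hh hq1 hq2
  obtain ⟨hF_lo, hF_hi⟩ := hφ.mem_Icc hle ht₀
  norm_num at hF_lo hF_hi
  set g : ℤ → ℝ := fun j => psi φ δ q (center h δ J q j)
  have hrow : ∀ j, a (-1) (j + 1) - a ((J : ℤ) - 1) j = l2 * (g (j + 1) - g j) - l1 := by
    intro j
    simp only [ha, g, center_neg_one, center_last h δ J q hJ, psi_zero, psi_one hφ hJh ht₀]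
    ring
  obtain ⟨h₀, hmid, hlast⟩ := increments_of_eq_affine_interior (g := g)
    (m := (h + δ ^ μ) / 2 - φ ((1 - (q : ℝ)) * δ)) (b := (h + δ ^ μ) / 2) hJ hJh
    (by simp only [g, center_neg_one, psi_zero])
    (by simp only [g, center_last h δ J q hJ, psi_one hφ hJh ht₀])
    (fun j hj₀ hj => psi_center_of_nonneg_of_lt q hφ hδh hj₀ hj)
    (by linarith) (by linarith) (by linarith)
  have hgap : ∀ {x y : ℝ}, x ≤ y → l2 * x - l1 ≤ l2 * y - l1 := fun hxy =>
    sub_le_sub_right (mul_le_mul_of_nonneg_left hxy hl2.le) l1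
  refine ⟨?_, fun j hj₀ hj => ?_, ?_, fun hl j hj₁ hj₂ => ?_⟩
  · rw [show a (-1) 0 = a (-1) (-1 + 1) by norm_num, hrow]
    exact hgap h₀
  · rw [hrow, hmid j hj₀ hj]
  · rw [show a (-1) ((J : ℤ) - 1) = a (-1) ((J : ℤ) - 2 + 1) by ring_nf, hrow,
      show (J : ℤ) - 2 + 1 = J - 1 by ring]
    exact hgap hlast
  · rw [← sub_pos, hrow]
    linarith [hgap (min_le_increment h₀ hmid hlast hj₁ hj₂)]

/-- in 2D, tails and heads of consecutive rows of mapped centers. -/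
theorem amap_two_dim_rows
    (N : ℕ) (hN : 2 ≤ N) (δ : ℝ) (hδ : 0 < δ) (μ : ℝ) (hμ : 0 < μ)
    (h : ℝ) (hh : h = (N : ℝ) * δ)
    (φ : ℝ → ℝ)
    (hφS : ∀ j : ℤ, ∀ t ∈ Set.Icc ((j : ℝ) * h) ((j : ℝ) * h + δ),
      φ t = (j : ℝ) * h + δ ^ μ * Sfun ((t - (j : ℝ) * h) / δ))
    (hφP : ∀ j : ℤ, ∀ t ∈ Set.Icc ((j : ℝ) * h + δ) (((j : ℝ) + 1) * h),
      φ t = (j : ℝ) * h + δ ^ μ + (h - δ ^ μ) * Pfun ((t - (j : ℝ) * h - δ) / (h - δ)))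
    (J : ℕ) (hJ : 0 < J) (hJh : (J : ℝ) * h = 1)
    (l1 l2 : ℝ) (hl1 : 0 < l1) (hl2 : 0 < l2)
    (q : ℕ) (hq1 : 1 ≤ q) (hq2 : q ≤ N)
    (hle : δ ^ μ ≤ h)
    (a : ℤ → ℤ → ℝ)
    (ha : ∀ j₁ j₂ : ℤ, a j₁ j₂ =
      l1 * psi φ δ q (center h δ J q j₁) + l2 * psi φ δ q (center h δ J q j₂)) :
    (l2 * ((h + δ ^ μ) / 2) - l1 ≤ a (-1) 0 - a ((J : ℤ) - 1) (-1)) ∧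
    (∀ j₂ : ℤ, 0 ≤ j₂ → j₂ ≤ (J : ℤ) - 3 →
      a (-1) (j₂ + 1) - a ((J : ℤ) - 1) j₂ = l2 * h - l1) ∧
    (l2 * ((h + δ ^ μ) / 2) - l1 ≤ a (-1) ((J : ℤ) - 1) - a ((J : ℤ) - 1) ((J : ℤ) - 2)) ∧
    (l1 < l2 * min h ((h + δ ^ μ) / 2) →
      ∀ j₂ : ℤ, -1 ≤ j₂ → j₂ ≤ (J : ℤ) - 2 →
        a ((J : ℤ) - 1) j₂ < a (-1) (j₂ + 1)) :=
  amap_two_dim_rows_general N hN δ hδ μ h hh φ hφP J hJ hJh l1 l2 hl2 q hq1 hq2 hle a ha
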